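/- Correctness of the coverability algorithm for reconfigurable well-structured broadcast networks: a configuration s is coverable in RBN(P) if and only if s is coverable (i.e., some s' ≥ s is reachable from an initial configuration) in the saturated process P'_w. -/

import Mathlib

def IsWqo {S : Type*} (le : S → S → Prop) : Prop :=
  Reflexive le ∧ Transitive le ∧ ∀ f : ℕ → S, ∃ i j, i < j ∧ le (f i) (f j)

/-- A broadcast transition on a fixed graph `(V, E)`. -/
def Broadcast {S A V : Type*} (Rb Rr : S → A → S → Prop)
    (E : V → V → Prop) (L L' : V → S) (a : A) : Prop :=
  ∃ v, Rb (L v) a (L' v) ∧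
    (∀ u, E v u → Rr (L u) a (L' u)) ∧
    (∀ w, w ≠ v → ¬ E v w → L' w = L w)

/-- One step of a reconfigurable broadcast network. -/
def RBNStep {S A V : Type*} (Rb Rr : S → A → S → Prop)
    (c c' : (V → V → Prop) × (V → S)) : Prop :=
  (c'.1 = c.1 ∧ ∃ a, Broadcast Rb Rr c.1 c.2 c'.2 a) ∨
  (c'.2 = c.2 ∧ (∀ v, ¬ c'.1 v v) ∧ (∀ u v, c'.1 u v → c'.1 v u))

/-- Coverability of `s` in the reconfigurable broadcast network `RBN(P)`. -/
def RBNCoverable {S A : Type*} (Rb Rr : S → A → S → Prop) (S₀ : Set S)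
    (le : S → S → Prop) (s : S) : Prop :=
  ∃ (n : ℕ) (E₀ : Fin n → Fin n → Prop) (L₀ : Fin n → S)
    (E : Fin n → Fin n → Prop) (L : Fin n → S),
    (∀ v, ¬ E₀ v v) ∧ (∀ u v, E₀ u v → E₀ v u) ∧
    (∀ v, L₀ v ∈ S₀) ∧
    Relation.ReflTransGen (RBNStep Rb Rr) (E₀, L₀) (E, L) ∧
    ∃ v, le s (L v)

/-- One step of the process `P'` in which all broadcast transitions are kept
and only the receive transitions with letters in `T` are kept. -/
def stepT {S A : Type*} (Rb Rr : S → A → S → Prop) (T : Set A)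
    (s s' : S) : Prop :=
  (∃ a, Rb s a s') ∨ (∃ a ∈ T, Rr s a s')

/-- Reachability from an initial configuration in the process `P'` with
receive letters restricted to `T`. -/
def ReachT {S A : Type*} (Rb Rr : S → A → S → Prop) (S₀ : Set S)
    (T : Set A) (s : S) : Prop :=
  ∃ s₀ ∈ S₀, Relation.ReflTransGen (stepT Rb Rr T) s₀ s

/-- Coverability in the process `P'` with receive letters restricted to `T`. -/
def CovT {S A : Type*} (Rb Rr : S → A → S → Prop) (S₀ : Set S)
    (le : S → S → Prop) (T : Set A) (s : S) : Prop :=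
  ∃ s', le s s' ∧ ReachT Rb Rr S₀ T s'

/-- The saturation sequence of the algorithm: `P'₀` has no receive
transitions; `P'ᵢ₊₁` additionally allows receiving every letter `a` such that
some configuration enabling a `!!a`-broadcast is coverable in `P'ᵢ`. -/
def Tseq {S A : Type*} (Rb Rr : S → A → S → Prop) (S₀ : Set S)
    (le : S → S → Prop) : ℕ → Set A
  | 0 => ∅
  | i + 1 => Tseq Rb Rr S₀ le i ∪
      {a | ∃ c c', Rb c a c' ∧ CovT Rb Rr S₀ le (Tseq Rb Rr S₀ le i) c}

/-- The saturated (fixed-point) set of receive letters. -/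
def Tw {S A : Type*} (Rb Rr : S → A → S → Prop) (S₀ : Set S)
    (le : S → S → Prop) : Set A :=
  ⋃ i, Tseq Rb Rr S₀ le i

/-!
Soundness: along any run of `RBN(P)`, every node is in a state reachable in `P'_w`. A node
receives `a` only from a neighbour in a state `c` enabling `!!a`; that state is itself reachable
in `P'_w`, hence already in some finite stage `P'_i`, so `a` belongs to the next stage.

Completeness: by induction on the stages, every state reachable in `P'_i` occurs at some node of
some finite network. A receive of `a` in `P'_i` is simulated by placing next to the receiving
network a disjoint copy of a network reaching a state that covers some `c` enabling `!!a`,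
connecting the two nodes and broadcasting (compatibility of `!!a` with `≤`). Reconfiguration lets
the two copies run independently before that.
-/

open Relation Function

section Saturation

variable {S A : Type*} {Rb Rr : S → A → S → Prop} {S₀ : Set S} {le : S → S → Prop}

lemma stepT_mono {T T' : Set A} (h : T ⊆ T') {s s' : S} :
    stepT Rb Rr T s s' → stepT Rb Rr T' s s'
  | .inl hb => .inl hb
  | .inr ⟨a, ha, hr⟩ => .inr ⟨a, h ha, hr⟩

lemma ReachT.tail {T : Set A} {s s' : S} (hs : ReachT Rb Rr S₀ T s)
    (h : stepT Rb Rr T s s') : ReachT Rb Rr S₀ T s' :=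
  let ⟨s₀, hs₀, hrun⟩ := hs
  ⟨s₀, hs₀, hrun.tail h⟩

lemma ReachT.mono {T T' : Set A} (h : T ⊆ T') {s : S} (hs : ReachT Rb Rr S₀ T s) :
    ReachT Rb Rr S₀ T' s :=
  let ⟨s₀, hs₀, hrun⟩ := hs
  ⟨s₀, hs₀, ReflTransGen.mono (fun _ _ => stepT_mono h) _ _ hrun⟩

lemma exists_reachT_of_reachT_iUnion {T : ℕ → Set A} (hT : Monotone T) {s : S}
    (hs : ReachT Rb Rr S₀ (⋃ i, T i) s) : ∃ i, ReachT Rb Rr S₀ (T i) s := by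
  obtain ⟨s₀, hs₀, hrun⟩ := hs
  induction hrun with
  | refl => exact ⟨0, s₀, hs₀, .refl⟩
  | tail _ step ih =>
    obtain ⟨i, hi⟩ := ih
    rcases step with hb | ⟨a, ha, hr⟩
    · exact ⟨i, hi.tail (.inl hb)⟩
    · obtain ⟨j, hj⟩ := Set.mem_iUnion.1 ha
      exact ⟨max i j, (hi.mono (hT (le_max_left i j))).tail
        (.inr ⟨a, hT (le_max_right i j) hj, hr⟩)⟩

lemma Tseq_mono : Monotone (Tseq Rb Rr S₀ le) :=
  monotone_nat_of_le_succ fun _ => Set.subset_union_left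

lemma mem_Tw_of_covT {c c' : S} {a : A} (hb : Rb c a c')
    (hc : CovT Rb Rr S₀ le (Tw Rb Rr S₀ le) c) : a ∈ Tw Rb Rr S₀ le := by
  obtain ⟨s', hle, hs'⟩ := hc
  obtain ⟨i, hi⟩ := exists_reachT_of_reachT_iUnion Tseq_mono hs'
  exact Set.mem_iUnion.2 ⟨i + 1, .inr ⟨c, c', hb, s', hle, hi⟩⟩

lemma reachT_Tw_of_rbnRun (hrefl : ∀ s, le s s) {V : Type*} {E₀ : V → V → Prop}
    {L₀ : V → S} (h₀ : ∀ v, L₀ v ∈ S₀) {c : (V → V → Prop) × (V → S)}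
    (hrun : ReflTransGen (RBNStep Rb Rr) (E₀, L₀) c) :
    ∀ v, ReachT Rb Rr S₀ (Tw Rb Rr S₀ le) (c.2 v) := by
  induction hrun with
  | refl => exact fun v => ⟨L₀ v, h₀ v, .refl⟩
  | @tail b _ _ step ih =>
    rcases step with ⟨-, a, v₀, hb, hrecv, hfro⟩ | ⟨hL, -, -⟩
    · intro v
      by_cases hv : v = v₀
      · subst hv
        exact (ih v).tail (.inl ⟨a, hb⟩)
      by_cases he : b.1 v₀ v
      · exact (ih v).tail (.inr ⟨a, mem_Tw_of_covT hb ⟨_, hrefl _, ih v₀⟩, hrecv v he⟩)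
      · rw [hfro v hv he]
        exact ih v
    · rw [hL]
      exact ih

variable (Rb Rr) in
/-- The graph can be reconfigured freely before every broadcast, so a run of `RBN(P)` only needs to
be tracked on the labellings. -/
def LabelStep {V : Type*} (L L' : V → S) : Prop :=
  ∃ E : V → V → Prop, (∀ v, ¬ E v v) ∧ (∀ u v, E u v → E v u) ∧ ∃ a, Broadcast Rb Rr E L L' a

lemma exists_rbnRun_of_labelRun {V : Type*} {L₀ L : V → S}
    (h : ReflTransGen (LabelStep Rb Rr) L₀ L) :
    ∃ E, ReflTransGen (RBNStep Rb Rr) ((fun _ _ => False), L₀) (E, L) := by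
  induction h with
  | refl => exact ⟨_, .refl⟩
  | @tail M _ _ step ih =>
    obtain ⟨E, hrun⟩ := ih
    obtain ⟨G, hirr, hsymm, hb⟩ := step
    have hconf : RBNStep Rb Rr (E, M) (G, M) := .inr ⟨rfl, hirr, hsymm⟩
    exact ⟨G, (hrun.tail hconf).tail (.inl ⟨rfl, hb⟩)⟩

lemma LabelStep.comp_equiv {V W : Type*} {L L' : V → S} (h : LabelStep Rb Rr L L')
    (e : W ≃ V) : LabelStep Rb Rr (L ∘ e) (L' ∘ e) := by
  obtain ⟨E, hirr, hsymm, a, v, hb, hrecv, hfro⟩ := h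
  refine ⟨fun x y => E (e x) (e y), fun x => hirr _, fun x y => hsymm _ _, a, e.symm v, ?_, ?_, ?_⟩
  · simpa using hb
  · intro u hu
    exact hrecv (e u) (by simpa using hu)
  · intro w hw hE
    exact hfro (e w) (fun h => hw (e.eq_symm_apply.2 h)) (by simpa using hE)

lemma LabelStep.sum_elim_left {V W : Type*} {L L' : V → S} (h : LabelStep Rb Rr L L')
    (M : W → S) : LabelStep Rb Rr (Sum.elim L M) (Sum.elim L' M) := by
  obtain ⟨E, hirr, hsymm, a, v, hb, hrecv, hfro⟩ := h
  refine ⟨Sum.LiftRel E fun _ _ => False, ?_, ?_, a, .inl v, hb, ?_, ?_⟩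
  · rintro _ (⟨h⟩ | ⟨h⟩)
    exacts [hirr _ h, h]
  · rintro _ _ (⟨h⟩ | ⟨h⟩)
    exacts [.inl (hsymm _ _ h), .inr h]
  · rintro (u | u) hu <;> simp_all
  · rintro (w | w) hw hE
    · exact hfro w (by simpa using hw) (by simpa using hE)
    · rfl

lemma LabelStep.sum_elim_right {V W : Type*} {L L' : W → S} (h : LabelStep Rb Rr L L')
    (M : V → S) : LabelStep Rb Rr (Sum.elim M L) (Sum.elim M L') := by
  simpa using (h.sum_elim_left M).comp_equiv (Equiv.sumComm V W)

lemma labelStep_update {V : Type*} [DecidableEq V] {L : V → S} {v : V} {a : A} {t : S}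
    (hb : Rb (L v) a t) : LabelStep Rb Rr L (update L v t) :=
  ⟨fun _ _ => False, fun _ h => h, fun _ _ h => h, a, v, by simpa using hb,
    fun _ h => h.elim, fun _ hw _ => update_of_ne hw _ _⟩

lemma labelStep_update_update {V : Type*} [DecidableEq V] {L : V → S} {v w : V} (hvw : v ≠ w) {a : A}
    {t s : S} (hb : Rb (L v) a t) (hr : Rr (L w) a s) :
    LabelStep Rb Rr L (update (update L v t) w s) := by
  refine ⟨fun x y => x = v ∧ y = w ∨ x = w ∧ y = v, ?_, ?_, a, v, ?_, ?_, ?_⟩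
  · rintro x (⟨rfl, rfl⟩ | ⟨rfl, rfl⟩) <;> exact hvw rfl
  · rintro x y (⟨rfl, rfl⟩ | ⟨rfl, rfl⟩) <;> simp
  · simpa [hvw] using hb
  · rintro u (⟨-, rfl⟩ | ⟨h, -⟩)
    · simpa using hr
    · exact absurd h hvw
  · intro x hx hE
    have hxw : x ≠ w := fun h => hE (.inl ⟨rfl, h⟩)
    simp [hx, hxw]

variable (Rb Rr S₀) in
def NetReachable (s : S) : Prop :=
  ∃ (n : ℕ) (L₀ L : Fin n → S), (∀ v, L₀ v ∈ S₀) ∧ ReflTransGen (LabelStep Rb Rr) L₀ L ∧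
    ∃ v, L v = s

lemma NetReachable.of_equiv {V : Type*} {n : ℕ} (e : V ≃ Fin n) {L₀ L : V → S}
    (h₀ : ∀ v, L₀ v ∈ S₀) (hrun : ReflTransGen (LabelStep Rb Rr) L₀ L) (v : V) :
    NetReachable Rb Rr S₀ (L v) :=
  ⟨n, L₀ ∘ e.symm, L ∘ e.symm, fun _ => h₀ _,
    hrun.lift _ fun _ _ h => h.comp_equiv e.symm, e v, by simp⟩

lemma netReachable_of_mem {s : S} (hs : s ∈ S₀) : NetReachable Rb Rr S₀ s :=
  ⟨1, fun _ => s, fun _ => s, fun _ => hs, .refl, 0, rfl⟩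

lemma NetReachable.broadcast {u s : S} {a : A} (hu : NetReachable Rb Rr S₀ u)
    (hb : Rb u a s) : NetReachable Rb Rr S₀ s := by
  obtain ⟨n, L₀, L, h₀, hrun, v, rfl⟩ := hu
  exact ⟨n, L₀, _, h₀, hrun.tail (labelStep_update hb), v, by simp⟩

lemma NetReachable.receive {u t t' s : S} {a : A} (hu : NetReachable Rb Rr S₀ u)
    (ht : NetReachable Rb Rr S₀ t) (hb : Rb t a t') (hr : Rr u a s) :
    NetReachable Rb Rr S₀ s := by
  obtain ⟨n₁, L₀, L, h₀, hrun, v, rfl⟩ := hu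
  obtain ⟨n₂, M₀, M, h₀', hrun', w, rfl⟩ := ht
  have hinit : ∀ x, Sum.elim L₀ M₀ x ∈ S₀ := by simp [h₀, h₀']
  have hsum : ReflTransGen (LabelStep Rb Rr) (Sum.elim L₀ M₀) (Sum.elim L M) :=
    (hrun.lift _ fun _ _ h => h.sum_elim_left M₀).trans
      (hrun'.lift _ fun _ _ h => h.sum_elim_right L)
  have hlast : LabelStep Rb Rr (Sum.elim L M)
      (update (update (Sum.elim L M) (.inr w) t') (.inl v) s) :=
    labelStep_update_update Sum.inr_ne_inl hb hr
  simpa only [update_self] using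
    NetReachable.of_equiv finSumFinEquiv hinit (hsum.tail hlast) (.inl v)

lemma NetReachable.rbnCoverable {s s' : S} (hs' : NetReachable Rb Rr S₀ s') (hle : le s s') :
    RBNCoverable Rb Rr S₀ le s := by
  obtain ⟨n, L₀, L, h₀, hrun, v, rfl⟩ := hs'
  obtain ⟨E, hE⟩ := exists_rbnRun_of_labelRun hrun
  exact ⟨n, _, L₀, E, L, fun _ h => h, fun _ _ h => h, h₀, hE, v, hle⟩

lemma netReachable_of_reachT {T : Set A}
    (hT : ∀ a ∈ T, ∃ t t', Rb t a t' ∧ NetReachable Rb Rr S₀ t) {s : S}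
    (hs : ReachT Rb Rr S₀ T s) : NetReachable Rb Rr S₀ s := by
  obtain ⟨s₀, hs₀, hrun⟩ := hs
  induction hrun with
  | refl => exact netReachable_of_mem hs₀
  | tail _ step ih =>
    rcases step with ⟨a, hb⟩ | ⟨a, ha, hr⟩
    · exact ih.broadcast hb
    · obtain ⟨t, t', hb, ht⟩ := hT a ha
      exact ih.receive ht hb hr

lemma exists_netReachable_broadcast_of_mem_Tseq
    (compatB : ∀ s₁ t₁ a s₂, le s₁ t₁ → Rb s₁ a s₂ → ∃ t₂, le s₂ t₂ ∧ Rb t₁ a t₂) :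
    ∀ i, ∀ a ∈ Tseq Rb Rr S₀ le i, ∃ t t', Rb t a t' ∧ NetReachable Rb Rr S₀ t
  | 0, _, ha => ha.elim
  | i + 1, a, .inl ha => exists_netReachable_broadcast_of_mem_Tseq compatB i a ha
  | i + 1, a, .inr ⟨c, c', hb, t, hct, ht⟩ =>
    have ⟨t', _, hb'⟩ := compatB c t a c' hct hb
    ⟨t, t', hb', netReachable_of_reachT (exists_netReachable_broadcast_of_mem_Tseq compatB i) ht⟩

end Saturation

theorem saturation_correct_general {S A : Type*} (le : S → S → Prop)
    (Rb Rr : S → A → S → Prop) (S₀ : Set S)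
    (hwqo : IsWqo le)
    (compatB : ∀ s₁ t₁ a s₂, le s₁ t₁ → Rb s₁ a s₂ →
        ∃ t₂, le s₂ t₂ ∧ Rb t₁ a t₂)
    (s : S) :
    RBNCoverable Rb Rr S₀ le s ↔ CovT Rb Rr S₀ le (Tw Rb Rr S₀ le) s := by
  constructor
  · rintro ⟨n, E₀, L₀, E, L, -, -, h₀, hrun, v, hv⟩
    exact ⟨L v, hv, reachT_Tw_of_rbnRun hwqo.1 h₀ hrun v⟩
  · rintro ⟨s', hle, hs'⟩
    have hTw : ∀ a ∈ Tw Rb Rr S₀ le, ∃ t t', Rb t a t' ∧ NetReachable Rb Rr S₀ t := fun a ha =>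
      let ⟨i, hi⟩ := Set.mem_iUnion.1 ha
      exists_netReachable_broadcast_of_mem_Tseq compatB i a hi
    exact (netReachable_of_reachT hTw hs').rbnCoverable hle

/-- Correctness of the coverability algorithm for reconfigurable
well-structured broadcast networks: `s` is coverable in `RBN(P)` iff `s` is
coverable in the saturated process `P'_w`. -/
theorem saturation_correct {S A : Type*} (le : S → S → Prop)
    (Rb Rr : S → A → S → Prop) (S₀ : Set S)
    (hwqo : IsWqo le)
    (compatB : ∀ s₁ t₁ a s₂, le s₁ t₁ → Rb s₁ a s₂ →
        ∃ t₂, le s₂ t₂ ∧ Rb t₁ a t₂)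
    (compatR : ∀ s₁ t₁ a s₂, le s₁ t₁ → Rr s₁ a s₂ →
        ∃ t₂, le s₂ t₂ ∧ Rr t₁ a t₂)
    (s : S) :
    RBNCoverable Rb Rr S₀ le s ↔ CovT Rb Rr S₀ le (Tw Rb Rr S₀ le) s :=
  saturation_correct_general le Rb Rr S₀ hwqo compatB s
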